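/- arXiv:1203.6743 — 5 statements merged into one kernel-verified Lean document; each statement's English description precedes it below -/
import Mathlib

section
/- Let H be a complex Hilbert space, let 0 ≤ ε < 1, and let K, L be closed subspaces of H that are ε-orthogonal. Then the subspace K + L is closed in H. -/
/-!
The addition map `K × L → H` is a bounded linear map with range `K ⊔ L`. The
`ε`-orthogonality bound `‖ξ + η‖² ≥ ‖ξ‖² + ‖η‖² - 2ε‖ξ‖‖η‖ ≥ (1 - ε)(‖ξ‖² + ‖η‖²)`
shows that it is bounded below by `1 - ε > 0`, so it is antilipschitz on the complete
space `K × L` and its range is closed.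
-/

open scoped ComplexInnerProductSpace

section NormedSpace

variable {𝕜 E : Type*} [NormedField 𝕜] [NormedAddCommGroup E] [NormedSpace 𝕜 E]

theorem Submodule.isClosed_sup_of_mul_max_norm_le_norm_add (K L : Submodule 𝕜 E)
    [CompleteSpace K] [CompleteSpace L] {c : ℝ} (hc : 0 < c)
    (hbound : ∀ ξ ∈ K, ∀ η ∈ L, c * max ‖ξ‖ ‖η‖ ≤ ‖ξ + η‖) :
    IsClosed ((K ⊔ L : Submodule 𝕜 E) : Set E) := by
  set f : K × L →L[𝕜] E := K.subtypeL.coprod L.subtypeL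
  have hrange : Set.range f = ((K ⊔ L : Submodule 𝕜 E) : Set E) := by
    change Set.range (f : K × L →ₗ[𝕜] E) = _
    rw [← LinearMap.coe_range, ContinuousLinearMap.range_coprod, Submodule.toLinearMap_subtypeL,
      Submodule.toLinearMap_subtypeL, Submodule.range_subtype, Submodule.range_subtype]
  have hanti : AntilipschitzWith ⟨c⁻¹, inv_nonneg.mpr hc.le⟩ f := by
    refine f.antilipschitz_of_bound fun p => ?_
    change ‖p‖ ≤ c⁻¹ * ‖f p‖
    rw [inv_mul_eq_div, le_div_iff₀ hc, mul_comm, Prod.norm_def]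
    exact hbound _ p.1.2 _ p.2.2
  rw [← hrange]
  exact hanti.isClosed_range f.uniformContinuous

end NormedSpace

section InnerProductSpace

variable {𝕜 E : Type*} [RCLike 𝕜] [NormedAddCommGroup E] [InnerProductSpace 𝕜 E]

theorem sq_add_sq_sub_two_mul_le_norm_add_sq {ε : ℝ} {ξ η : E}
    (h : ‖(inner 𝕜 ξ η : 𝕜)‖ ≤ ε * ‖ξ‖ * ‖η‖) :
    ‖ξ‖ ^ 2 + ‖η‖ ^ 2 - 2 * (ε * ‖ξ‖ * ‖η‖) ≤ ‖ξ + η‖ ^ 2 := by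
  have hre : -(ε * ‖ξ‖ * ‖η‖) ≤ RCLike.re (inner 𝕜 ξ η) :=
    neg_le_of_abs_le ((RCLike.abs_re_le_norm _).trans h)
  rw [norm_add_sq (𝕜 := 𝕜)]
  linarith

theorem one_sub_mul_max_norm_le_norm_add {ε : ℝ} (hε₀ : 0 ≤ ε) (hε₁ : ε ≤ 1) {ξ η : E}
    (h : ‖(inner 𝕜 ξ η : 𝕜)‖ ≤ ε * ‖ξ‖ * ‖η‖) :
    (1 - ε) * max ‖ξ‖ ‖η‖ ≤ ‖ξ + η‖ := by
  have hsum := sq_add_sq_sub_two_mul_le_norm_add_sq h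
  have hmax : max ‖ξ‖ ‖η‖ ^ 2 ≤ ‖ξ‖ ^ 2 + ‖η‖ ^ 2 := by
    rcases max_choice ‖ξ‖ ‖η‖ with hm | hm <;> rw [hm] <;> nlinarith [sq_nonneg ‖ξ‖, sq_nonneg ‖η‖]
  have hamgm : 2 * (ε * ‖ξ‖ * ‖η‖) ≤ ε * (‖ξ‖ ^ 2 + ‖η‖ ^ 2) := by
    nlinarith [mul_nonneg hε₀ (sq_nonneg (‖ξ‖ - ‖η‖))]
  refine le_of_pow_le_pow_left₀ two_ne_zero (norm_nonneg _) ?_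
  calc ((1 - ε) * max ‖ξ‖ ‖η‖) ^ 2
      ≤ (1 - ε) * max ‖ξ‖ ‖η‖ ^ 2 := by
        rw [mul_pow, sq (1 - ε), mul_assoc]
        exact mul_le_of_le_one_left (by positivity) (by linarith)
    _ ≤ (1 - ε) * (‖ξ‖ ^ 2 + ‖η‖ ^ 2) := by gcongr
    _ ≤ ‖ξ + η‖ ^ 2 := by linarith

end InnerProductSpace

/-- If `K` and `L` are closed subspaces of a complex Hilbert space `H` that are
`ε`-orthogonal for some `0 ≤ ε < 1`, then `K + L` is closed. -/
theorem closed_sum_of_epsilon_orthogonal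
    {H : Type*} [NormedAddCommGroup H] [InnerProductSpace ℂ H] [CompleteSpace H]
    (ε : ℝ) (hε₀ : 0 ≤ ε) (hε₁ : ε < 1)
    (K L : Submodule ℂ H)
    (hK : IsClosed (K : Set H)) (hL : IsClosed (L : Set H))
    (horth : ∀ ξ ∈ K, ∀ η ∈ L, ‖⟪ξ, η⟫‖ ≤ ε * ‖ξ‖ * ‖η‖) :
    IsClosed ((K ⊔ L : Submodule ℂ H) : Set H) := by
  have : CompleteSpace K := hK.completeSpace_coe
  have : CompleteSpace L := hL.completeSpace_coe
  exact K.isClosed_sup_of_mul_max_norm_le_norm_add L (sub_pos.mpr hε₁) fun ξ hξ η hη =>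
    one_sub_mul_max_norm_le_norm_add hε₀ hε₁.le (horth ξ hξ η hη)
end

section
/- Let H be a complex Hilbert space, ε ≥ 0, and K, L closed subspaces of H that are ε-orthogonal, with orthogonal projections p and q respectively. Let r denote the orthogonal projection onto the closure of K + L. Then for every ξ ∈ H one has ‖pξ‖² + ‖qξ‖² ≤ (1 + ε)²·‖rξ‖². -/
/-!
Write `k`, `l`, `ρ` for the projections of `ξ` onto `K`, `L` and `M = closure (K + L)`.
Since `k, l ∈ M`, `S := ‖k‖² + ‖l‖² = re ⟪k + l, ρ⟫ ≤ ‖k + l‖ ‖ρ‖`, while `ε`-orthogonality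
gives `‖k + l‖² ≤ (1 + ε) S`. Squaring the first bound yields `S ≤ (1 + ε) ‖ρ‖²`.
-/

open scoped ComplexInnerProductSpace

open RCLike

theorem le_mul_sq_of_le_mul_of_sq_le_mul {S a b c : ℝ} (hS : 0 ≤ S) (hc : 0 ≤ c)
    (hab : S ≤ a * b) (ha : a ^ 2 ≤ c * S) : S ≤ c * b ^ 2 := by
  rcases hS.eq_or_lt with rfl | hS
  · positivity
  · have : S ^ 2 ≤ c * S * b ^ 2 := by nlinarith
    nlinarith

section

variable {𝕜 E : Type*} [RCLike 𝕜] [NormedAddCommGroup E] [InnerProductSpace 𝕜 E]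

local notation "⟪" x ", " y "⟫" => inner 𝕜 x y

theorem norm_add_sq_le_of_norm_inner_le {x y : E} {ε : ℝ} (hε : 0 ≤ ε)
    (h : ‖⟪x, y⟫‖ ≤ ε * ‖x‖ * ‖y‖) : ‖x + y‖ ^ 2 ≤ (1 + ε) * (‖x‖ ^ 2 + ‖y‖ ^ 2) := by
  have hre : re ⟪x, y⟫ ≤ ε * ‖x‖ * ‖y‖ := (re_le_norm _).trans h
  have hamgm : 2 * ‖x‖ * ‖y‖ ≤ ‖x‖ ^ 2 + ‖y‖ ^ 2 := two_mul_le_add_sq ‖x‖ ‖y‖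
  rw [norm_add_sq (𝕜 := 𝕜)]
  nlinarith

namespace Submodule

theorem re_inner_starProjection_starProjection_of_le {U V : Submodule 𝕜 E}
    [U.HasOrthogonalProjection] [V.HasOrthogonalProjection] (h : U ≤ V) (v : E) :
    re ⟪U.starProjection v, V.starProjection v⟫ = ‖U.starProjection v‖ ^ 2 := by
  rw [← inner_starProjection_left_eq_right,
    V.starProjection_eq_self_iff.mpr (h (U.starProjection_apply_mem v))]
  exact U.re_inner_starProjection_eq_normSq v

theorem norm_sq_starProjection_add_le_of_le {K L M : Submodule 𝕜 E} [K.HasOrthogonalProjection]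
    [L.HasOrthogonalProjection] [M.HasOrthogonalProjection] (hKM : K ≤ M) (hLM : L ≤ M)
    {ε : ℝ} (hε : 0 ≤ ε) (horth : ∀ x ∈ K, ∀ y ∈ L, ‖⟪x, y⟫‖ ≤ ε * ‖x‖ * ‖y‖) (v : E) :
    ‖K.starProjection v‖ ^ 2 + ‖L.starProjection v‖ ^ 2 ≤ (1 + ε) * ‖M.starProjection v‖ ^ 2 := by
  set k := K.starProjection v
  set l := L.starProjection v
  set ρ := M.starProjection v
  have hS : ‖k‖ ^ 2 + ‖l‖ ^ 2 ≤ ‖k + l‖ * ‖ρ‖ :=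
    calc ‖k‖ ^ 2 + ‖l‖ ^ 2 = re ⟪k + l, ρ⟫ := by
          rw [inner_add_left, map_add, re_inner_starProjection_starProjection_of_le hKM,
            re_inner_starProjection_starProjection_of_le hLM]
      _ ≤ ‖⟪k + l, ρ⟫‖ := re_le_norm _
      _ ≤ ‖k + l‖ * ‖ρ‖ := norm_inner_le_norm _ _
  have hkl : ‖k + l‖ ^ 2 ≤ (1 + ε) * (‖k‖ ^ 2 + ‖l‖ ^ 2) :=
    norm_add_sq_le_of_norm_inner_le hε
      (horth k (K.starProjection_apply_mem v) l (L.starProjection_apply_mem v))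
  exact le_mul_sq_of_le_mul_of_sq_le_mul (by positivity) (by positivity) hS hkl

end Submodule

end

theorem norm_sq_proj_add_le_of_epsilon_orthogonal_general
    {H : Type*} [NormedAddCommGroup H] [InnerProductSpace ℂ H] [CompleteSpace H]
    (ε : ℝ) (hε : 0 ≤ ε)
    (K L : Submodule ℂ H)
    [CompleteSpace K] [CompleteSpace L]
    (horth : ∀ ξ ∈ K, ∀ η ∈ L, ‖⟪ξ, η⟫‖ ≤ ε * ‖ξ‖ * ‖η‖) :
    ∀ ξ : H,
      ‖(Submodule.orthogonalProjectionOnto K ξ : H)‖ ^ 2 + ‖(Submodule.orthogonalProjectionOnto L ξ : H)‖ ^ 2 ≤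
        (1 + ε) ^ 2 * ‖(Submodule.orthogonalProjectionOnto (K ⊔ L : Submodule ℂ H).topologicalClosure ξ : H)‖ ^ 2 := by
  intro ξ
  set M := (K ⊔ L).topologicalClosure
  have hKM : K ≤ M := le_sup_left.trans (K ⊔ L).le_topologicalClosure
  have hLM : L ≤ M := le_sup_right.trans (K ⊔ L).le_topologicalClosure
  calc _ ≤ (1 + ε) * ‖M.starProjection ξ‖ ^ 2 :=
        Submodule.norm_sq_starProjection_add_le_of_le hKM hLM hε horth ξ
    _ ≤ (1 + ε) ^ 2 * ‖M.starProjection ξ‖ ^ 2 := by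
        gcongr
        nlinarith

/-- If `K` and `L` are `ε`-orthogonal closed subspaces of a complex Hilbert space
with orthogonal projections `p` and `q`, and `r` is the orthogonal projection onto
the closure of `K + L`, then `‖pξ‖² + ‖qξ‖² ≤ (1 + ε)² ‖rξ‖²` for all `ξ`. -/
theorem norm_sq_proj_add_le_of_epsilon_orthogonal
    {H : Type*} [NormedAddCommGroup H] [InnerProductSpace ℂ H] [CompleteSpace H]
    (ε : ℝ) (hε : 0 ≤ ε)
    (K L : Submodule ℂ H)
    (hK : IsClosed (K : Set H)) (hL : IsClosed (L : Set H))
    [CompleteSpace K] [CompleteSpace L]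
    (horth : ∀ ξ ∈ K, ∀ η ∈ L, ‖⟪ξ, η⟫‖ ≤ ε * ‖ξ‖ * ‖η‖) :
    ∀ ξ : H,
      ‖(Submodule.orthogonalProjectionOnto K ξ : H)‖ ^ 2 + ‖(Submodule.orthogonalProjectionOnto L ξ : H)‖ ^ 2 ≤
        (1 + ε) ^ 2 * ‖(Submodule.orthogonalProjectionOnto (K ⊔ L : Submodule ℂ H).topologicalClosure ξ : H)‖ ^ 2 :=
  norm_sq_proj_add_le_of_epsilon_orthogonal_general ε hε K L horth
end

section
/- Let H be a complex Hilbert space, 0 ≤ ε < 1, and K₁, K₂, K₃ closed subspaces of H such that Kᵢ and Kⱼ are ε-orthogonal for all i ≠ j. Then the closure of K₁ + K₂ and K₃ are ε'-orthogonal, where ε' = √2·ε/√(1 − ε). -/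
/-!
Writing `ξ = a + b` with `a ∈ K₁`, `b ∈ K₂`, the two pairwise bounds against `η ∈ K₃` give
`|⟪ξ, η⟫| ≤ ε (‖a‖ + ‖b‖) ‖η‖`. The near-orthogonality of `a` and `b` controls `‖a‖ + ‖b‖` by
`‖ξ‖`: `‖ξ‖² ≥ ‖a‖² + ‖b‖² - 2ε‖a‖‖b‖ ≥ (1 - ε)(‖a‖² + ‖b‖²) ≥ (1 - ε)(‖a‖ + ‖b‖)² / 2`.
The resulting bound on `K₁ + K₂` is a closed condition in `ξ`, so it passes to the closure.
-/

open scoped InnerProductSpace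

section EpsOrthogonal

variable (𝕜 : Type*) {E : Type*} [RCLike 𝕜] [NormedAddCommGroup E] [InnerProductSpace 𝕜 E]

def EpsOrthogonal (ε : ℝ) (K L : Set E) : Prop :=
  ∀ ξ ∈ K, ∀ η ∈ L, ‖⟪ξ, η⟫_𝕜‖ ≤ ε * ‖ξ‖ * ‖η‖

variable {𝕜} {ε : ℝ} {K L : Set E}

theorem EpsOrthogonal.symm (h : EpsOrthogonal 𝕜 ε K L) : EpsOrthogonal 𝕜 ε L K := by
  intro ξ hξ η hη
  rw [← norm_inner_symm, mul_right_comm]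
  exact h η hη ξ hξ

theorem EpsOrthogonal.closure_left (h : EpsOrthogonal 𝕜 ε K L) :
    EpsOrthogonal 𝕜 ε (closure K) L := by
  intro ξ hξ η hη
  have hclosed : IsClosed {x : E | ‖⟪x, η⟫_𝕜‖ ≤ ε * ‖x‖ * ‖η‖} :=
    isClosed_le (by fun_prop) (by fun_prop)
  exact closure_minimal (fun x hx ↦ h x hx η hη) hclosed hξ

theorem one_sub_mul_add_sq_norm_le_norm_add_sq (hε₀ : 0 ≤ ε) {a b : E}
    (hab : ‖⟪a, b⟫_𝕜‖ ≤ ε * ‖a‖ * ‖b‖) :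
    (1 - ε) * (‖a‖ ^ 2 + ‖b‖ ^ 2) ≤ ‖a + b‖ ^ 2 := by
  have hre : -‖⟪a, b⟫_𝕜‖ ≤ RCLike.re ⟪a, b⟫_𝕜 :=
    neg_le_of_abs_le (RCLike.abs_re_le_norm _)
  have hamgm : 2 * ε * (‖a‖ * ‖b‖) ≤ ε * (‖a‖ ^ 2 + ‖b‖ ^ 2) := by
    nlinarith [mul_nonneg hε₀ (sq_nonneg (‖a‖ - ‖b‖))]
  rw [norm_add_sq (𝕜 := 𝕜)]
  nlinarith

theorem norm_add_norm_le_of_norm_inner_le (hε₀ : 0 ≤ ε) (hε₁ : ε < 1) {a b : E}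
    (hab : ‖⟪a, b⟫_𝕜‖ ≤ ε * ‖a‖ * ‖b‖) :
    ‖a‖ + ‖b‖ ≤ √2 / √(1 - ε) * ‖a + b‖ := by
  have h1ε : 0 < 1 - ε := sub_pos.mpr hε₁
  rw [div_mul_eq_mul_div, le_div_iff₀ (Real.sqrt_pos.mpr h1ε)]
  apply le_of_pow_le_pow_left₀ two_ne_zero (by positivity)
  rw [mul_pow, mul_pow, Real.sq_sqrt h1ε.le, Real.sq_sqrt zero_le_two]
  nlinarith [one_sub_mul_add_sq_norm_le_norm_add_sq hε₀ hab, sq_nonneg (‖a‖ - ‖b‖)]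

theorem EpsOrthogonal.sup_left (hε₀ : 0 ≤ ε) (hε₁ : ε < 1) {K₁ K₂ : Submodule 𝕜 E}
    (h₁₂ : EpsOrthogonal 𝕜 ε (K₁ : Set E) K₂) (h₁ : EpsOrthogonal 𝕜 ε (K₁ : Set E) L)
    (h₂ : EpsOrthogonal 𝕜 ε (K₂ : Set E) L) :
    EpsOrthogonal 𝕜 (√2 * ε / √(1 - ε)) ((K₁ ⊔ K₂ : Submodule 𝕜 E) : Set E) L := by
  intro ξ hξ η hη
  obtain ⟨a, ha, b, hb, rfl⟩ := Submodule.mem_sup.mp hξ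
  calc ‖⟪a + b, η⟫_𝕜‖ ≤ ‖⟪a, η⟫_𝕜‖ + ‖⟪b, η⟫_𝕜‖ := by
        rw [inner_add_left]; exact norm_add_le _ _
    _ ≤ ε * ‖a‖ * ‖η‖ + ε * ‖b‖ * ‖η‖ := add_le_add (h₁ a ha η hη) (h₂ b hb η hη)
    _ = ε * (‖a‖ + ‖b‖) * ‖η‖ := by ring
    _ ≤ ε * (√2 / √(1 - ε) * ‖a + b‖) * ‖η‖ := by
        gcongr; exact norm_add_norm_le_of_norm_inner_le hε₀ hε₁ (h₁₂ a ha b hb)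
    _ = √2 * ε / √(1 - ε) * ‖a + b‖ * ‖η‖ := by ring

end EpsOrthogonal

open scoped ComplexInnerProductSpace

theorem epsilon_orthogonal_sup_of_three_general
    {H : Type*} [NormedAddCommGroup H] [InnerProductSpace ℂ H]
    (ε : ℝ) (hε₀ : 0 ≤ ε) (hε₁ : ε < 1)
    (K₁ K₂ K₃ : Submodule ℂ H)
    (h₁₂ : ∀ ξ ∈ K₁, ∀ η ∈ K₂, ‖⟪ξ, η⟫‖ ≤ ε * ‖ξ‖ * ‖η‖)
    (h₂₃ : ∀ ξ ∈ K₂, ∀ η ∈ K₃, ‖⟪ξ, η⟫‖ ≤ ε * ‖ξ‖ * ‖η‖)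
    (h₃₁ : ∀ ξ ∈ K₃, ∀ η ∈ K₁, ‖⟪ξ, η⟫‖ ≤ ε * ‖ξ‖ * ‖η‖) :
    ∀ ξ ∈ (K₁ ⊔ K₂ : Submodule ℂ H).topologicalClosure, ∀ η ∈ K₃,
      ‖⟪ξ, η⟫‖ ≤ Real.sqrt 2 * ε / Real.sqrt (1 - ε) * ‖ξ‖ * ‖η‖ := by
  have hsup : EpsOrthogonal ℂ (√2 * ε / √(1 - ε)) ((K₁ ⊔ K₂ : Submodule ℂ H) : Set H) K₃ :=
    EpsOrthogonal.sup_left hε₀ hε₁ h₁₂ (EpsOrthogonal.symm h₃₁) h₂₃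
  exact hsup.closure_left

/-- If `K₁, K₂, K₃` are pairwise `ε`-orthogonal closed subspaces of a complex
Hilbert space with `0 ≤ ε < 1`, then the closure of `K₁ + K₂` and `K₃` are
`ε'`-orthogonal with `ε' = √2 ε / √(1 - ε)`. -/
theorem epsilon_orthogonal_sup_of_three
    {H : Type*} [NormedAddCommGroup H] [InnerProductSpace ℂ H] [CompleteSpace H]
    (ε : ℝ) (hε₀ : 0 ≤ ε) (hε₁ : ε < 1)
    (K₁ K₂ K₃ : Submodule ℂ H)
    (hK₁ : IsClosed (K₁ : Set H)) (hK₂ : IsClosed (K₂ : Set H)) (hK₃ : IsClosed (K₃ : Set H))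
    (h₁₂ : ∀ ξ ∈ K₁, ∀ η ∈ K₂, ‖⟪ξ, η⟫‖ ≤ ε * ‖ξ‖ * ‖η‖)
    (h₂₃ : ∀ ξ ∈ K₂, ∀ η ∈ K₃, ‖⟪ξ, η⟫‖ ≤ ε * ‖ξ‖ * ‖η‖)
    (h₃₁ : ∀ ξ ∈ K₃, ∀ η ∈ K₁, ‖⟪ξ, η⟫‖ ≤ ε * ‖ξ‖ * ‖η‖) :
    ∀ ξ ∈ (K₁ ⊔ K₂ : Submodule ℂ H).topologicalClosure, ∀ η ∈ K₃,
      ‖⟪ξ, η⟫‖ ≤ Real.sqrt 2 * ε / Real.sqrt (1 - ε) * ‖ξ‖ * ‖η‖ :=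
  epsilon_orthogonal_sup_of_three_general ε hε₀ hε₁ K₁ K₂ K₃ h₁₂ h₂₃ h₃₁
end

section
/- Let H be a complex Hilbert space, k ≥ 1, and 0 ≤ ε < 1/2 such that the iterates δ^{∘j}(ε) are defined and satisfy δ^{∘j}(ε) < 1/2 for all 0 ≤ j ≤ k − 2 and δ^{∘(k−1)}(ε) < 1. Let K₁, …, K_{2^k} be closed subspaces of H such that Kᵢ and Kⱼ are ε-orthogonal whenever i ≠ j, let pᵢ denote the orthogonal projection onto Kᵢ, and for 1 ≤ ℓ ≤ k let P_ℓ denote the orthogonal projection onto the closure of K₁ + ⋯ + K_{2^ℓ}. Then for all 1 ≤ ℓ ≤ k and all ξ ∈ H, Σ_{i=1}^{2^ℓ} ‖pᵢξ‖² ≤ (∏_{j=0}^{ℓ−1} (1 + δ^{∘j}(ε))²)·‖P_ℓ ξ‖². -/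
/-!
Merge the subspaces in consecutive pairs. For `ε`-orthogonal `K, L` inside a closed `M`, writing
`s = ‖p_K ξ‖² + ‖p_L ξ‖²` one has `s = Re ⟪p_K ξ + p_L ξ, p_M ξ⟫ ≤ √((1 + ε) s) ‖p_M ξ‖`, so
`s ≤ (1 + ε) ‖p_M ξ‖²`. The closed spans of two disjoint pairs taken from a pairwise
`ε`-orthogonal family are `2ε / (1 - ε)`-orthogonal, and `2ε / (1 - ε) ≤ δ(ε)`. Induction on `ℓ`
then bounds the sum by `∏ (1 + δ^{∘j}(ε)) ‖P_ℓ ξ‖²`, which is at most the claimed bound.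
-/

open scoped ComplexInnerProductSpace

noncomputable def deltaFun (ε : ℝ) : ℝ :=
  2 * ε / Real.sqrt (1 - ε - Real.sqrt 2 * ε * Real.sqrt (1 - ε))

open Finset

lemma deltaFun_nonneg {ε : ℝ} (hε : 0 ≤ ε) : 0 ≤ deltaFun ε := by
  unfold deltaFun; positivity

lemma deltaFun_iterate_nonneg {ε : ℝ} (hε : 0 ≤ ε) (j : ℕ) : 0 ≤ deltaFun^[j] ε :=
  Function.Iterate.rec (0 ≤ ·) hε (fun _ => deltaFun_nonneg) j

lemma two_mul_div_one_sub_le_deltaFun {ε : ℝ} (hε₀ : 0 ≤ ε) (hε₁ : ε < 1 / 2) :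
    2 * ε / (1 - ε) ≤ deltaFun ε := by
  set r := 1 - ε - Real.sqrt 2 * ε * Real.sqrt (1 - ε)
  have hsqrt2 : Real.sqrt 2 ^ 2 = 2 := Real.sq_sqrt (by norm_num)
  have hsqrt : Real.sqrt (1 - ε) ^ 2 = 1 - ε := Real.sq_sqrt (by linarith)
  have hsqrt_le : Real.sqrt (1 - ε) ≤ Real.sqrt 2 := Real.sqrt_le_sqrt (by linarith)
  -- `√2 ε √(1 - ε) < 1 - ε` squares to `2ε² < 1 - ε`, i.e. `(1 - 2ε)(1 + ε) > 0`.
  have hr_pos : 0 < r := by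
    have : Real.sqrt 2 * ε * Real.sqrt (1 - ε) < 1 - ε := by
      apply lt_of_pow_lt_pow_left₀ 2 (by linarith)
      rw [mul_pow, mul_pow, hsqrt2, hsqrt]
      nlinarith [mul_pos (mul_pos (by linarith : (0:ℝ) < 1 - ε) (by linarith : (0:ℝ) < 1 - 2 * ε))
        (by linarith : (0:ℝ) < 1 + ε)]
    linarith
  have hr_le : r ≤ (1 - ε) ^ 2 := by
    nlinarith [mul_nonneg (mul_nonneg (sub_nonneg.2 hsqrt_le) (Real.sqrt_nonneg (1 - ε))) hε₀]
  have hsqrt_r : Real.sqrt r ≤ 1 - ε :=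
    (Real.sqrt_le_sqrt hr_le).trans_eq (Real.sqrt_sq (by linarith))
  exact div_le_div_of_nonneg_left (by linarith) (Real.sqrt_pos.2 hr_pos) hsqrt_r

theorem Finset.sum_range_two_mul {M : Type*} [AddCommMonoid M] (f : ℕ → M) (n : ℕ) :
    ∑ i ∈ range (2 * n), f i = ∑ i ∈ range n, (f (2 * i) + f (2 * i + 1)) := by
  induction n with
  | zero => simp
  | succ n ih =>
    rw [show 2 * (n + 1) = 2 * n + 1 + 1 by ring, sum_range_succ, sum_range_succ, sum_range_succ,
      ih, add_assoc]

namespace Submodule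

variable {𝕜 E : Type*} [RCLike 𝕜] [NormedAddCommGroup E] [InnerProductSpace 𝕜 E]

def IsEpsOrtho (ε : ℝ) (K L : Submodule 𝕜 E) : Prop :=
  ∀ x ∈ K, ∀ y ∈ L, ‖(inner 𝕜 x y : 𝕜)‖ ≤ ε * ‖x‖ * ‖y‖

namespace IsEpsOrtho

variable {ε c : ℝ} {K L M : Submodule 𝕜 E}

theorem symm (h : K.IsEpsOrtho ε L) : L.IsEpsOrtho ε K := fun y hy x hx => by
  rw [norm_inner_symm, mul_right_comm]
  exact h x hx y hy

theorem mono {ε' : ℝ} (h : K.IsEpsOrtho ε L) (hε : ε ≤ ε') : K.IsEpsOrtho ε' L :=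
  fun x hx y hy => (h x hx y hy).trans (by gcongr)

theorem norm_add_sq_le (h : K.IsEpsOrtho ε L) (hε : 0 ≤ ε) {x y : E} (hx : x ∈ K) (hy : y ∈ L) :
    ‖x + y‖ ^ 2 ≤ (1 + ε) * (‖x‖ ^ 2 + ‖y‖ ^ 2) := by
  have hre : RCLike.re (inner 𝕜 x y) ≤ ε * ‖x‖ * ‖y‖ := (RCLike.re_le_norm _).trans (h x hx y hy)
  nlinarith [norm_add_sq (𝕜 := 𝕜) x y, sq_nonneg (‖x‖ - ‖y‖)]

theorem le_norm_add_sq (h : K.IsEpsOrtho ε L) (hε : 0 ≤ ε) {x y : E} (hx : x ∈ K) (hy : y ∈ L) :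
    (1 - ε) * (‖x‖ ^ 2 + ‖y‖ ^ 2) ≤ ‖x + y‖ ^ 2 := by
  have hre : -(ε * ‖x‖ * ‖y‖) ≤ RCLike.re (inner 𝕜 x y) := by
    linarith [neg_abs_le (RCLike.re (inner 𝕜 x y)), RCLike.abs_re_le_norm (inner 𝕜 x y),
      h x hx y hy]
  nlinarith [norm_add_sq (𝕜 := 𝕜) x y, sq_nonneg (‖x‖ - ‖y‖)]

theorem topologicalClosure_left (h : K.IsEpsOrtho c M) : K.topologicalClosure.IsEpsOrtho c M := by
  intro x hx y hy
  have hclosed : IsClosed {x : E | ‖(inner 𝕜 x y : 𝕜)‖ ≤ c * ‖x‖ * ‖y‖} :=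
    isClosed_le (by fun_prop) (by fun_prop)
  rw [← SetLike.mem_coe, topologicalClosure_coe] at hx
  exact closure_minimal (fun x hx => h x hx y hy) hclosed hx

theorem sup_left (hKL : K.IsEpsOrtho ε L) (hKM : K.IsEpsOrtho c M) (hLM : L.IsEpsOrtho c M)
    (hε₀ : 0 ≤ ε) (hε₁ : ε < 1) (hc : 0 ≤ c) :
    (K ⊔ L).IsEpsOrtho (Real.sqrt 2 * c / Real.sqrt (1 - ε)) M := by
  intro z hz w hw
  obtain ⟨x, hx, y, hy, rfl⟩ := mem_sup.mp hz
  set s := ‖x‖ ^ 2 + ‖y‖ ^ 2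
  have hroot : 0 < Real.sqrt (1 - ε) := Real.sqrt_pos.2 (by linarith)
  -- Cauchy–Schwarz in `ℝ²`
  have hsum : ‖x‖ + ‖y‖ ≤ Real.sqrt 2 * Real.sqrt s := by
    rw [← Real.sqrt_mul zero_le_two]
    exact Real.le_sqrt_of_sq_le (by nlinarith [sq_nonneg (‖x‖ - ‖y‖)])
  have hlow : Real.sqrt (1 - ε) * Real.sqrt s ≤ ‖x + y‖ := by
    rw [← Real.sqrt_mul (by linarith)]
    exact Real.sqrt_le_iff.2 ⟨norm_nonneg _, hKL.le_norm_add_sq hε₀ hx hy⟩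
  calc ‖(inner 𝕜 (x + y) w : 𝕜)‖ ≤ c * ‖x‖ * ‖w‖ + c * ‖y‖ * ‖w‖ := by
        rw [inner_add_left]
        exact (norm_add_le _ _).trans (add_le_add (hKM x hx w hw) (hLM y hy w hw))
    _ = c * (‖x‖ + ‖y‖) * ‖w‖ := by ring
    _ ≤ c * (Real.sqrt 2 * Real.sqrt s) * ‖w‖ := by gcongr
    _ = Real.sqrt 2 * c / Real.sqrt (1 - ε) * (Real.sqrt (1 - ε) * Real.sqrt s) * ‖w‖ := by
        field_simp
    _ ≤ Real.sqrt 2 * c / Real.sqrt (1 - ε) * ‖x + y‖ * ‖w‖ := by gcongr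

-- Apply `sup_left` twice: `√2 · (√2 ε / √(1 - ε)) / √(1 - ε) = 2ε / (1 - ε)`.
theorem topologicalClosure_sup {K₁ K₂ K₃ K₄ : Submodule 𝕜 E}
    (h₁₂ : K₁.IsEpsOrtho ε K₂) (h₃₄ : K₃.IsEpsOrtho ε K₄) (h₁₃ : K₁.IsEpsOrtho ε K₃)
    (h₁₄ : K₁.IsEpsOrtho ε K₄) (h₂₃ : K₂.IsEpsOrtho ε K₃) (h₂₄ : K₂.IsEpsOrtho ε K₄)
    (hε₀ : 0 ≤ ε) (hε₁ : ε < 1) :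
    (K₁ ⊔ K₂).topologicalClosure.IsEpsOrtho (2 * ε / (1 - ε)) (K₃ ⊔ K₄).topologicalClosure := by
  have h₃₄₁ := (h₃₄.sup_left h₁₃.symm h₁₄.symm hε₀ hε₁ hε₀).topologicalClosure_left
  have h₃₄₂ := (h₃₄.sup_left h₂₃.symm h₂₄.symm hε₀ hε₁ hε₀).topologicalClosure_left
  have h := (h₁₂.sup_left h₃₄₁.symm h₃₄₂.symm hε₀ hε₁ (by positivity)).topologicalClosure_left
  rwa [mul_div_assoc', ← mul_assoc, Real.mul_self_sqrt zero_le_two, div_div,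
    Real.mul_self_sqrt (by linarith)] at h

end IsEpsOrtho

theorem norm_orthogonalProjectionOnto_le_of_le {U V : Submodule 𝕜 E} [U.HasOrthogonalProjection]
    [V.HasOrthogonalProjection] (h : U ≤ V) (x : E) :
    ‖(U.orthogonalProjectionOnto x : E)‖ ≤ ‖(V.orthogonalProjectionOnto x : E)‖ := by
  rw [← orthogonalProjectionOnto_starProjection_of_le h x]
  exact norm_orthogonalProjectionOnto_apply_le U _

theorem norm_sq_add_norm_sq_orthogonalProjectionOnto_le {ε : ℝ} {K L M : Submodule 𝕜 E}
    [K.HasOrthogonalProjection] [L.HasOrthogonalProjection] [M.HasOrthogonalProjection]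
    (h : K.IsEpsOrtho ε L) (hε : 0 ≤ ε) (hK : K ≤ M) (hL : L ≤ M) (x : E) :
    ‖(K.orthogonalProjectionOnto x : E)‖ ^ 2 + ‖(L.orthogonalProjectionOnto x : E)‖ ^ 2 ≤
      (1 + ε) * ‖(M.orthogonalProjectionOnto x : E)‖ ^ 2 := by
  simp only [← starProjection_apply]
  set a := K.starProjection x
  set b := L.starProjection x
  set m := M.starProjection x
  set s := ‖a‖ ^ 2 + ‖b‖ ^ 2
  have hab : a + b ∈ M := add_mem (hK (coe_mem _)) (hL (coe_mem _))
  have hs : s = RCLike.re (inner 𝕜 (a + b) m) := by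
    rw [← inner_starProjection_left_eq_right, starProjection_eq_self_iff.2 hab, inner_add_left,
      map_add, re_inner_starProjection_eq_normSq, re_inner_starProjection_eq_normSq]
    rfl
  have hs_sq : s * s ≤ s * ((1 + ε) * ‖m‖ ^ 2) := by
    have hs_le : s ≤ ‖a + b‖ * ‖m‖ := hs ▸ (RCLike.re_le_norm _).trans (norm_inner_le_norm _ _)
    have hab_le : ‖a + b‖ ^ 2 ≤ (1 + ε) * s := h.norm_add_sq_le hε (coe_mem _) (coe_mem _)
    nlinarith [mul_self_le_mul_self (by positivity) hs_le]
  rcases (show 0 ≤ s by positivity).eq_or_lt with hs0 | hs0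
  · rw [← hs0]; positivity
  · exact le_of_mul_le_mul_left hs_sq hs0

variable [CompleteSpace E]

theorem sum_norm_sq_orthogonalProjectionOnto_le_prod_deltaFun (ℓ : ℕ) {ε : ℝ} (hε : 0 ≤ ε)
    (hδ : ∀ j, j + 2 ≤ ℓ → deltaFun^[j] ε < 1 / 2)
    (K : ℕ → Submodule 𝕜 E) [∀ i, CompleteSpace (K i)]
    (hK : ∀ i < 2 ^ ℓ, ∀ j < 2 ^ ℓ, i ≠ j → (K i).IsEpsOrtho ε (K j))
    (M : Submodule 𝕜 E) [CompleteSpace M] (hM : ∀ i < 2 ^ ℓ, K i ≤ M) (x : E) :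
    ∑ i ∈ range (2 ^ ℓ), ‖((K i).orthogonalProjectionOnto x : E)‖ ^ 2 ≤
      (∏ j ∈ range ℓ, (1 + deltaFun^[j] ε)) * ‖(M.orthogonalProjectionOnto x : E)‖ ^ 2 := by
  induction ℓ generalizing ε K with
  | zero =>
    simpa using pow_le_pow_left₀ (norm_nonneg _)
      (norm_orthogonalProjectionOnto_le_of_le (hM 0 Nat.one_pos) x) 2
  | succ ℓ ih =>
    set L : ℕ → Submodule 𝕜 E := fun i => (K (2 * i) ⊔ K (2 * i + 1)).topologicalClosure
    have hM_closed : IsClosed (M : Set E) := (completeSpace_coe_iff_isComplete.1 ‹_›).isClosed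
    have hLM : ∀ i < 2 ^ ℓ, L i ≤ M := fun i hi =>
      topologicalClosure_minimal _ (sup_le (hM _ (by omega)) (hM _ (by omega))) hM_closed
    have hL : ∀ i < 2 ^ ℓ, ∀ j < 2 ^ ℓ, i ≠ j → (L i).IsEpsOrtho (deltaFun ε) (L j) := by
      intro i hi j hj hij
      rcases Nat.eq_zero_or_pos ℓ with rfl | hℓ
      · simp only [pow_zero, Nat.lt_one_iff] at hi hj
        exact absurd (hi.trans hj.symm) hij
      have hε₁ : ε < 1 / 2 := hδ 0 (by omega)
      refine (IsEpsOrtho.topologicalClosure_sup ?_ ?_ ?_ ?_ ?_ ?_ hε (by linarith)).mono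
        (two_mul_div_one_sub_le_deltaFun hε hε₁) <;> exact hK _ (by omega) _ (by omega) (by omega)
    have hpair : ∀ i < 2 ^ ℓ, ‖((K (2 * i)).orthogonalProjectionOnto x : E)‖ ^ 2 +
        ‖((K (2 * i + 1)).orthogonalProjectionOnto x : E)‖ ^ 2 ≤
          (1 + ε) * ‖((L i).orthogonalProjectionOnto x : E)‖ ^ 2 := fun i hi =>
      norm_sq_add_norm_sq_orthogonalProjectionOnto_le
        (hK _ (by omega) _ (by omega) (by omega)) hε
        (le_sup_left.trans (le_topologicalClosure _))
        (le_sup_right.trans (le_topologicalClosure _)) x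
    have hδ' : ∀ j, j + 2 ≤ ℓ → deltaFun^[j] (deltaFun ε) < 1 / 2 := fun j hj => by
      simpa only [Function.iterate_succ_apply] using hδ (j + 1) (by omega)
    have hprod : ∏ j ∈ range (ℓ + 1), (1 + deltaFun^[j] ε) =
        (1 + ε) * ∏ j ∈ range ℓ, (1 + deltaFun^[j] (deltaFun ε)) := by
      simp only [prod_range_succ', Function.iterate_succ_apply, Function.iterate_zero_apply,
        mul_comm]
    calc ∑ i ∈ range (2 ^ (ℓ + 1)), ‖((K i).orthogonalProjectionOnto x : E)‖ ^ 2
        = ∑ i ∈ range (2 ^ ℓ), (‖((K (2 * i)).orthogonalProjectionOnto x : E)‖ ^ 2 +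
            ‖((K (2 * i + 1)).orthogonalProjectionOnto x : E)‖ ^ 2) := by
          rw [pow_succ', sum_range_two_mul]
      _ ≤ (1 + ε) * ∑ i ∈ range (2 ^ ℓ), ‖((L i).orthogonalProjectionOnto x : E)‖ ^ 2 := by
          rw [mul_sum]; exact sum_le_sum fun i hi => hpair i (mem_range.1 hi)
      _ ≤ (1 + ε) * ((∏ j ∈ range ℓ, (1 + deltaFun^[j] (deltaFun ε))) *
            ‖(M.orthogonalProjectionOnto x : E)‖ ^ 2) :=
          mul_le_mul_of_nonneg_left (ih (deltaFun_nonneg hε) hδ' L hL hLM) (by linarith)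
      _ = _ := by rw [hprod, mul_assoc]

end Submodule

theorem sum_norm_sq_proj_le_of_pairwise_epsilon_orthogonal_general
    {H : Type*} [NormedAddCommGroup H] [InnerProductSpace ℂ H] [CompleteSpace H]
    (k : ℕ)
    (ε : ℝ) (hε₀ : 0 ≤ ε)
    (hiter : ∀ j, j ≤ k - 2 → deltaFun^[j] ε < 1 / 2)
    (K : ℕ → Submodule ℂ H)
    [∀ i, CompleteSpace (K i)]
    (horth : ∀ i j, i < 2 ^ k → j < 2 ^ k → i ≠ j →
      ∀ ξ ∈ K i, ∀ η ∈ K j, ‖⟪ξ, η⟫‖ ≤ ε * ‖ξ‖ * ‖η‖) :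
    ∀ ℓ, 1 ≤ ℓ → ℓ ≤ k → ∀ ξ : H,
      ∑ i ∈ Finset.range (2 ^ ℓ), ‖(Submodule.orthogonalProjectionOnto (K i) ξ : H)‖ ^ 2 ≤
        (∏ j ∈ Finset.range ℓ, (1 + deltaFun^[j] ε) ^ 2) *
          ‖(Submodule.orthogonalProjectionOnto
              (⨆ i ∈ Finset.range (2 ^ ℓ), K i : Submodule ℂ H).topologicalClosure ξ : H)‖ ^ 2 := by
  intro ℓ _ hℓk ξ
  have hpow : 2 ^ ℓ ≤ 2 ^ k := Nat.pow_le_pow_right two_pos hℓk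
  have hM : ∀ i < 2 ^ ℓ, K i ≤ (⨆ i ∈ range (2 ^ ℓ), K i).topologicalClosure := fun i hi =>
    (le_iSup₂ (f := fun i _ => K i) i (mem_range.2 hi)).trans (Submodule.le_topologicalClosure _)
  refine (Submodule.sum_norm_sq_orthogonalProjectionOnto_le_prod_deltaFun ℓ hε₀
    (fun j hj => hiter j (by omega)) K
    (fun i hi j hj hij => horth i j (hi.trans_le hpow) (hj.trans_le hpow) hij) _ hM ξ).trans ?_
  have hge : ∀ j, 1 ≤ 1 + deltaFun^[j] ε := fun j =>
    le_add_of_nonneg_right (deltaFun_iterate_nonneg hε₀ j)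
  exact mul_le_mul_of_nonneg_right (prod_le_prod (fun j _ => zero_le_one.trans (hge j))
    fun j _ => le_self_pow₀ (hge j) two_ne_zero) (sq_nonneg _)

/-- Proposition 2.3: if `K₁, …, K_{2^k}` are pairwise `ε`-orthogonal closed subspaces
with projections `pᵢ`, and `P_ℓ` is the projection onto the closure of
`K₁ + ⋯ + K_{2^ℓ}`, then `Σ_{i=1}^{2^ℓ} ‖pᵢξ‖² ≤ ∏_{j=0}^{ℓ-1} (1 + δ^{∘j}(ε))² ‖P_ℓ ξ‖²`. -/
theorem sum_norm_sq_proj_le_of_pairwise_epsilon_orthogonal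
    {H : Type*} [NormedAddCommGroup H] [InnerProductSpace ℂ H] [CompleteSpace H]
    (k : ℕ) (hk : 1 ≤ k)
    (ε : ℝ) (hε₀ : 0 ≤ ε) (hε₁ : ε < 1 / 2)
    (hiter : ∀ j, j ≤ k - 2 → deltaFun^[j] ε < 1 / 2)
    (hlast : deltaFun^[k - 1] ε < 1)
    (K : ℕ → Submodule ℂ H)
    (hKclosed : ∀ i, IsClosed ((K i : Set H)))
    [∀ i, CompleteSpace (K i)]
    (horth : ∀ i j, i < 2 ^ k → j < 2 ^ k → i ≠ j →
      ∀ ξ ∈ K i, ∀ η ∈ K j, ‖⟪ξ, η⟫‖ ≤ ε * ‖ξ‖ * ‖η‖) :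
    ∀ ℓ, 1 ≤ ℓ → ℓ ≤ k → ∀ ξ : H,
      ∑ i ∈ Finset.range (2 ^ ℓ), ‖(Submodule.orthogonalProjectionOnto (K i) ξ : H)‖ ^ 2 ≤
        (∏ j ∈ Finset.range ℓ, (1 + deltaFun^[j] ε) ^ 2) *
          ‖(Submodule.orthogonalProjectionOnto
              (⨆ i ∈ Finset.range (2 ^ ℓ), K i : Submodule ℂ H).topologicalClosure ξ : H)‖ ^ 2 :=
  sum_norm_sq_proj_le_of_pairwise_epsilon_orthogonal_general k ε hε₀ hiter K horth
end

section
/- Let G be an infinite countable discrete group and π : G → U(H) a mixing unitary representation on a complex Hilbert space H. Let (e_n)_{n∈ℕ} be a bounded sequence in H such that for every g ∈ G, ‖π(g)e_n − e_n‖ → 0 as n → ∞. Then e_n converges to 0 weakly, i.e., ⟨e_n, η⟩ → 0 for every η ∈ H. -/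
open scoped ComplexInnerProductSpace Pointwise
open Filter Finset Topology

/-!
Averaging η over a large finite set `F ⊆ G` whose elements are pairwise far apart (so that, by
mixing, the translates `π g η` are almost orthogonal) gives a vector of norm `o(#F)`. Pairing with
an asymptotically invariant sequence cannot tell `π g η` from `η`, so `#F ⟪e n, η⟫` is eventually
close to `⟪e n, ∑ g ∈ F, π g η⟫`, which is at most `C · o(#F)`.
-/

theorem norm_sum_sq_le_of_pairwise_norm_inner_le {𝕜 E ι : Type*} [RCLike 𝕜]
    [NormedAddCommGroup E] [InnerProductSpace 𝕜 E] (s : Finset ι) (u : ι → E) {δ : ℝ}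
    (hδ : 0 ≤ δ) (h : (s : Set ι).Pairwise fun i j => ‖inner 𝕜 (u i) (u j)‖ ≤ δ) :
    ‖∑ i ∈ s, u i‖ ^ 2 ≤ ∑ i ∈ s, ‖u i‖ ^ 2 + s.card ^ 2 * δ := by
  classical
  have hterm : ∀ i ∈ s, ∀ j ∈ s,
      ‖inner 𝕜 (u i) (u j)‖ ≤ (if i = j then ‖u i‖ ^ 2 else 0) + δ := by
    intro i hi j hj
    split_ifs with hij
    · subst hij
      rw [inner_self_eq_norm_sq_to_K]
      simp [hδ]
    · simpa using h hi hj hij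
  calc ‖∑ i ∈ s, u i‖ ^ 2 = ‖inner 𝕜 (∑ i ∈ s, u i) (∑ j ∈ s, u j)‖ := by
        rw [inner_self_eq_norm_sq_to_K]; simp
    _ = ‖∑ i ∈ s, ∑ j ∈ s, inner 𝕜 (u i) (u j)‖ := by simp_rw [sum_inner, inner_sum]
    _ ≤ ∑ i ∈ s, ∑ j ∈ s, ‖inner 𝕜 (u i) (u j)‖ :=
        (norm_sum_le _ _).trans (sum_le_sum fun i _ => norm_sum_le _ _)
    _ ≤ ∑ i ∈ s, ∑ j ∈ s, ((if i = j then ‖u i‖ ^ 2 else 0) + δ) :=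
        sum_le_sum fun i hi => sum_le_sum fun j hj => hterm i hi j hj
    _ = ∑ i ∈ s, ‖u i‖ ^ 2 + s.card ^ 2 * δ := by
        simp only [sum_add_distrib, sum_ite_eq, sum_const, nsmul_eq_mul]
        rw [sum_ite_of_true fun _ hi => hi]
        ring

theorem Infinite.exists_finset_card_eq_pairwise_inv_mul_notMem {G : Type*} [Group G]
    [Infinite G] {S : Set G} (hS : S.Finite) (N : ℕ) :
    ∃ F : Finset G, F.card = N ∧ (F : Set G).Pairwise fun g h => h⁻¹ * g ∉ S := by
  classical
  induction N with
  | zero => exact ⟨∅, rfl, by simp⟩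
  | succ N ih =>
    obtain ⟨F, hcard, hF⟩ := ih
    have hbad : (↑F ∪ ↑F * S ∪ ↑F * S⁻¹ : Set G).Finite :=
      (F.finite_toSet.union (F.finite_toSet.mul hS)).union (F.finite_toSet.mul hS.inv)
    obtain ⟨x, hx⟩ := hbad.infinite_compl.nonempty
    simp only [Set.mem_compl_iff, Set.mem_union, not_or] at hx
    obtain ⟨⟨hxF, hxFS⟩, hxFS'⟩ := hx
    refine ⟨insert x F, by rw [card_insert_of_notMem hxF, hcard], ?_⟩
    rw [coe_insert, Set.pairwise_insert]
    refine ⟨hF, fun h hh _ => ⟨fun hs => hxFS ⟨h, hh, h⁻¹ * x, hs, by group⟩,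
      fun hs => hxFS' ⟨h, hh, (x⁻¹ * h)⁻¹, by simpa using hs, by group⟩⟩⟩

section Representation

variable {G H : Type*} [Group G] [NormedAddCommGroup H] [InnerProductSpace ℂ H]
  (π : G →* (H ≃ₗᵢ[ℂ] H))

theorem MonoidHom.inner_map_map (g h : G) (x y : H) : ⟪π g x, π h y⟫ = ⟪π (h⁻¹ * g) x, y⟫ := by
  rw [← (π h⁻¹).inner_map_map, map_mul]
  simp

theorem exists_finset_norm_sum_map_le [Infinite G] {η : H}
    (hη : Tendsto (fun g => ⟪π g η, η⟫) cofinite (𝓝 0)) {ε : ℝ} (hε : 0 < ε) :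
    ∃ F : Finset G, F.Nonempty ∧ ‖∑ g ∈ F, π g η‖ ≤ ε * F.card := by
  set δ := ε ^ 2 / 2
  have hδ : 0 < δ := by positivity
  have hS : {g | ¬ ‖⟪π g η, η⟫‖ < δ}.Finite :=
    eventually_cofinite.1 (NormedAddGroup.tendsto_nhds_zero.1 hη δ hδ)
  obtain ⟨N, hN⟩ := exists_nat_gt (‖η‖ ^ 2 / δ)
  have hN0 : (0 : ℝ) < N := (div_nonneg (sq_nonneg _) hδ.le).trans_lt hN
  obtain ⟨F, hcard, hF⟩ := Infinite.exists_finset_card_eq_pairwise_inv_mul_notMem hS N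
  refine ⟨F, card_pos.1 (hcard ▸ by exact_mod_cast hN0), ?_⟩
  have hsep : (F : Set G).Pairwise fun g h => ‖⟪π g η, π h η⟫‖ ≤ δ := hF.imp fun g h hgh => by
    rw [π.inner_map_map]
    exact (not_not.1 hgh).le
  have hsq : ‖∑ g ∈ F, π g η‖ ^ 2 ≤ (ε * F.card) ^ 2 := by
    have hη2 : ‖η‖ ^ 2 ≤ N * δ := ((div_lt_iff₀ hδ).1 hN).le
    calc ‖∑ g ∈ F, π g η‖ ^ 2 ≤ ∑ g ∈ F, ‖π g η‖ ^ 2 + F.card ^ 2 * δ :=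
          norm_sum_sq_le_of_pairwise_norm_inner_le F _ hδ.le hsep
      _ = N * ‖η‖ ^ 2 + N ^ 2 * δ := by simp [hcard]
      _ ≤ N * (N * δ) + N ^ 2 * δ := by gcongr
      _ = (ε * F.card) ^ 2 := by rw [hcard]; ring
  exact (pow_le_pow_iff_left₀ (norm_nonneg _) (by positivity) two_ne_zero).1 hsq

theorem tendsto_inner_map_sub_inner {α : Type*} {l : Filter α} {e : α → H} {g : G}
    (he : Tendsto (fun n => ‖π g⁻¹ (e n) - e n‖) l (𝓝 0)) (η : H) :
    Tendsto (fun n => ⟪e n, π g η⟫ - ⟪e n, η⟫) l (𝓝 0) := by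
  have hrw : ∀ n, ⟪e n, π g η⟫ - ⟪e n, η⟫ = ⟪π g⁻¹ (e n) - e n, η⟫ := fun n => by
    rw [inner_sub_left, ← (π g⁻¹).inner_map_map (e n)]
    simp
  simp_rw [hrw]
  refine squeeze_zero_norm (fun n => norm_inner_le_norm _ _) ?_
  simpa using he.mul_const ‖η‖

end Representation

theorem tendsto_inner_zero_of_asymptotically_invariant_general
    {G : Type*} [Group G] [Infinite G]
    {H : Type*} [NormedAddCommGroup H] [InnerProductSpace ℂ H]
    (π : G →* (H ≃ₗᵢ[ℂ] H))
    (hmix : ∀ ξ η : H, Filter.Tendsto (fun g : G => ⟪π g ξ, η⟫)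
      Filter.cofinite (nhds 0))
    (e : ℕ → H) (C : ℝ) (hbdd : ∀ n, ‖e n‖ ≤ C)
    (hinv : ∀ g : G, Filter.Tendsto (fun n => ‖π g (e n) - e n‖)
      Filter.atTop (nhds 0)) :
    ∀ η : H, Filter.Tendsto (fun n => ⟪e n, η⟫) Filter.atTop (nhds 0) := by
  intro η
  have hC : 0 ≤ C := (norm_nonneg _).trans (hbdd 0)
  refine NormedAddGroup.tendsto_nhds_zero.2 fun ε hε => ?_
  obtain ⟨F, hF, hv⟩ := exists_finset_norm_sum_map_le π (hmix η η)
    (show 0 < ε / (2 * (C + 1)) by positivity)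
  set v := ∑ g ∈ F, π g η
  have hN : (0 : ℝ) < F.card := by exact_mod_cast hF.card_pos
  have hdefect : Tendsto (fun n => ⟪e n, v⟫ - F.card * ⟪e n, η⟫) atTop (𝓝 0) := by
    simpa [v, inner_sum, sum_sub_distrib] using
      tendsto_finsetSum F fun g _ => tendsto_inner_map_sub_inner π (hinv g⁻¹) η
  filter_upwards [NormedAddGroup.tendsto_nhds_zero.1 hdefect (F.card * (ε / 2)) (by positivity)]
    with n hn
  refine lt_of_mul_lt_mul_left ?_ hN.le
  calc F.card * ‖⟪e n, η⟫‖ = ‖⟪e n, v⟫ - (⟪e n, v⟫ - F.card * ⟪e n, η⟫)‖ := by simp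
    _ ≤ ‖e n‖ * ‖v‖ + ‖⟪e n, v⟫ - F.card * ⟪e n, η⟫‖ :=
        (norm_sub_le _ _).trans (add_le_add_left (norm_inner_le_norm _ _) _)
    _ < C * (ε / (2 * (C + 1)) * F.card) + F.card * (ε / 2) :=
        add_lt_add_of_le_of_lt (mul_le_mul (hbdd n) hv (norm_nonneg _) hC) hn
    _ ≤ (C + 1) * (ε / (2 * (C + 1)) * F.card) + F.card * (ε / 2) := by gcongr; linarith
    _ = F.card * ε := by field_simp; ring

/-- For a mixing unitary representation of an infinite countable discrete group,
any bounded asymptotically invariant sequence converges weakly to `0`. -/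
theorem tendsto_inner_zero_of_asymptotically_invariant
    {G : Type*} [Group G] [Countable G] [Infinite G]
    {H : Type*} [NormedAddCommGroup H] [InnerProductSpace ℂ H] [CompleteSpace H]
    (π : G →* (H ≃ₗᵢ[ℂ] H))
    (hmix : ∀ ξ η : H, Filter.Tendsto (fun g : G => ⟪π g ξ, η⟫)
      Filter.cofinite (nhds 0))
    (e : ℕ → H) (C : ℝ) (hbdd : ∀ n, ‖e n‖ ≤ C)
    (hinv : ∀ g : G, Filter.Tendsto (fun n => ‖π g (e n) - e n‖)
      Filter.atTop (nhds 0)) :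
    ∀ η : H, Filter.Tendsto (fun n => ⟪e n, η⟫) Filter.atTop (nhds 0) :=
  tendsto_inner_zero_of_asymptotically_invariant_general π hmix e C hbdd hinv
end
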